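/- Let R be a commutative ring, f₁,...,f_s ∈ R, and p a prime ideal of R. Then p contains the ideal generated by the products {∏_{j∉J} f_j : J ⊆ {1,...,s}, |J| = q} if and only if there exists a subset K ⊆ {1,...,s} with |K| = q+1 such that f_i ∈ p for all i ∈ K. -/

import Mathlib

/-!
A prime contains `∏_{j ∉ J} f_j` exactly when it contains some `f_j` with `j ∉ J`, i.e. when
`J` fails to cover the set `S = {i | f i ∈ p}`. No `q`-set covers `S` exactly when
`#S > q`, since otherwise `S` extends to a `q`-set; and `#S ≥ q + 1` means `S` has a
`(q + 1)`-subset.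
-/

section

open Finset

variable {ι : Type*} [Fintype ι]

theorem Finset.lt_card_iff_forall_card_eq_not_subset {S : Finset ι} {q : ℕ}
    (hq : q ≤ Fintype.card ι) : q < #S ↔ ∀ J : Finset ι, #J = q → ¬ S ⊆ J := by
  refine ⟨fun hS J hJ hSJ => (card_le_card hSJ).not_gt (hJ ▸ hS), fun h => ?_⟩
  by_contra! hS
  obtain ⟨J, hSJ, hJ⟩ := exists_superset_card_eq hS hq
  exact h J hJ hSJ

theorem Ideal.span_prod_compl_le_iff_forall_not_subset [DecidableEq ι] {R : Type*} [CommRing R]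
    (f : ι → R) (p : Ideal R) [p.IsPrime] [DecidablePred (· ∈ p)] (q : ℕ) :
    Ideal.span ((fun J : Finset ι => ∏ j ∈ Jᶜ, f j) '' {J | #J = q}) ≤ p ↔
      ∀ J : Finset ι, #J = q → ¬ ({i | f i ∈ p} : Finset ι) ⊆ J := by
  rw [Ideal.span_le, Set.image_subset_iff]
  refine forall₂_congr fun J _ => ?_
  simp only [Set.mem_preimage, SetLike.mem_coe, Ideal.IsPrime.prod_mem_iff, mem_compl,
    not_subset, mem_filter, mem_univ, true_and, and_comm]

end

theorem span_prod_compl_le_prime_iff_general (R : Type*) [CommRing R] (s q : ℕ)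
    (hs : q < s) (f : Fin s → R) (p : Ideal R) [p.IsPrime] :
    Ideal.span ((fun J : Finset (Fin s) => ∏ j ∈ Jᶜ, f j) '' {J | J.card = q}) ≤ p ↔
      ∃ K : Finset (Fin s), K.card = q + 1 ∧ ∀ i ∈ K, f i ∈ p := by
  classical
  rw [Ideal.span_prod_compl_le_iff_forall_not_subset,
    ← Finset.lt_card_iff_forall_card_eq_not_subset (by simpa using hs.le), Nat.lt_iff_add_one_le,
    Finset.le_card_iff_exists_subset_card]
  simp only [Finset.subset_iff, Finset.mem_filter, Finset.mem_univ, true_and]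
  exact exists_congr fun _ => and_comm

/-- A prime ideal `p` contains the ideal generated by the products `∏_{j ∉ J} f_j`
(over all `J ⊆ {1,…,s}` with `|J| = q`) if and only if there is a subset `K` with
`|K| = q + 1` such that `f_i ∈ p` for all `i ∈ K`. -/
theorem span_prod_compl_le_prime_iff (R : Type*) [CommRing R] (s q : ℕ)
    (hq : 1 ≤ q) (hs : q < s) (f : Fin s → R) (p : Ideal R) [p.IsPrime] :
    Ideal.span ((fun J : Finset (Fin s) => ∏ j ∈ Jᶜ, f j) '' {J | J.card = q}) ≤ p ↔
      ∃ K : Finset (Fin s), K.card = q + 1 ∧ ∀ i ∈ K, f i ∈ p :=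
  span_prod_compl_le_prime_iff_general R s q hs f p
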